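/- Let p, q be distinct primes with q^2 dividing p−1, r of multiplicative order q^2 modulo p, and let G = (Z_p × Z_p) ⋊ Z_{q^2} where the generator acts by the scalar r on both coordinates. Then Aut(G) is isomorphic to (Z_p × Z_p) ⋊ GL(2,p), where GL(2,p) acts naturally on Z_p × Z_p. -/

import Mathlib

/-!
Write `V = ℤ_p²` and `C = ℤ_{q²}`. The exponents `p` and `q²` are coprime, so every automorphism
of `V ⋊ C` maps `V` to itself and restricts to some `α ∈ Aut V`; conversely, as `C` acts on `V`
by scalars, every `α ∈ Aut V` extends to `V ⋊ C` by fixing `C`. An automorphism fixing `V`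
pointwise sends the generator `c` to an element acting on `V` as `c` does, hence (the action
being faithful) to `v c` for some `v ∈ V`; since `1 - r` is invertible mod `p`,
`v = w · (c w)⁻¹` for a unique `w`, and the automorphism is conjugation by `w`. So
`(w, α) ↦ conj w ∘ α` is an isomorphism from the holomorph `V ⋊ Aut V` onto `Aut (V ⋊ C)`,
and `Aut V = GL(2, p)`.
-/

open Multiplicative

theorem MonoidHom.map_mem_center_of_zpowers_eq_top {G H : Type*} [Group G] [Group H]
    {f : G →* H} {g₀ : G} (hg₀ : Subgroup.zpowers g₀ = ⊤) (h : f g₀ ∈ Subgroup.center H)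
    (g : G) : f g ∈ Subgroup.center H :=
  (hg₀ ▸ Subgroup.zpowers_le.mpr (show g₀ ∈ (Subgroup.center H).comap f from h))
    (Subgroup.mem_top g)

theorem MulAut.apply_apply_of_mem_center {N : Type*} [Group N] {σ : MulAut N}
    (hσ : σ ∈ Subgroup.center (MulAut N)) (α : MulAut N) (x : N) : α (σ x) = σ (α x) :=
  DFunLike.congr_fun (Subgroup.mem_center_iff.mp hσ α) x

abbrev Holomorph (N : Type*) [Group N] := N ⋊[MonoidHom.id (MulAut N)] MulAut N

namespace SemidirectProduct

section Group

variable {N G : Type*} [Group N] [Group G] {φ : G →* MulAut N}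

theorem inl_left_of_right_eq_one {y : N ⋊[φ] G} (hy : y.right = 1) : inl y.left = y := by
  ext <;> simp [hy]

theorem right_eq_one_of_pow_eq_one {y : N ⋊[φ] G} {m : ℕ} (hy : y ^ m = 1)
    (hm : m.Coprime (Monoid.exponent G)) : y.right = 1 := by
  refine (pow_eq_one_iff_of_coprime hm).mp ⟨?_, Monoid.pow_exponent_eq_one _⟩
  simpa only [map_pow, map_one, rightHom_eq_right] using congrArg rightHom hy

theorem right_map_inl_eq_one (hexp : (Monoid.exponent N).Coprime (Monoid.exponent G))
    (β : MulAut (N ⋊[φ] G)) (x : N) : (β (inl x)).right = 1 :=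
  right_eq_one_of_pow_eq_one (by rw [← map_pow, ← map_pow, Monoid.pow_exponent_eq_one, map_one,
    map_one]) hexp

def mulAutRestrictInl (hexp : (Monoid.exponent N).Coprime (Monoid.exponent G))
    (β : MulAut (N ⋊[φ] G)) : MulAut N where
  toFun x := (β (inl x)).left
  invFun x := (β.symm (inl x)).left
  left_inv x := by
    simp [inl_left_of_right_eq_one (right_map_inl_eq_one hexp β x)]
  right_inv x := by
    simp [inl_left_of_right_eq_one (right_map_inl_eq_one hexp β.symm x)]
  map_mul' x y := by
    simp [right_map_inl_eq_one hexp β x]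

theorem inl_mulAutRestrictInl (hexp : (Monoid.exponent N).Coprime (Monoid.exponent G))
    (β : MulAut (N ⋊[φ] G)) (x : N) : inl (mulAutRestrictInl hexp β x) = β (inl x) :=
  inl_left_of_right_eq_one (right_map_inl_eq_one hexp β x)

variable (φ) in
def mulAutOfCentral (hφ : ∀ g, φ g ∈ Subgroup.center (MulAut N)) :
    MulAut N →* MulAut (N ⋊[φ] G) where
  toFun α := congr α (MulEquiv.refl G) fun g => Subgroup.mem_center_iff.mp (hφ g) α
  map_one' := rfl
  map_mul' _ _ := rfl

@[simp]
theorem mulAutOfCentral_apply (hφ : ∀ g, φ g ∈ Subgroup.center (MulAut N)) (α : MulAut N)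
    (y : N ⋊[φ] G) : mulAutOfCentral φ hφ α y = ⟨α y.left, y.right⟩ := rfl

@[simp]
theorem mulAutOfCentral_symm_apply (hφ : ∀ g, φ g ∈ Subgroup.center (MulAut N))
    (α : MulAut N) (y : N ⋊[φ] G) :
    (mulAutOfCentral φ hφ α).symm y = ⟨α.symm y.left, y.right⟩ := rfl

end Group

section CommGroup

variable {N G : Type*} [CommGroup N] [Group G] {φ : G →* MulAut N}

theorem mul_inl_mul_inv (y : N ⋊[φ] G) (x : N) : y * inl x * y⁻¹ = inl (φ y.right x) := by
  ext <;> simp [mul_comm]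

variable (φ) in
def holomorphToMulAut (hφ : ∀ g, φ g ∈ Subgroup.center (MulAut N)) :
    Holomorph N →* MulAut (N ⋊[φ] G) :=
  lift (MulAut.conj.comp inl) (mulAutOfCentral φ hφ) fun α => by
    ext x y <;> simp [MulAut.conj_apply, MulAut.apply_apply_of_mem_center (hφ _)]

variable (hφ : ∀ g, φ g ∈ Subgroup.center (MulAut N))

theorem holomorphToMulAut_inl (z : Holomorph N) (x : N) :
    holomorphToMulAut φ hφ z (inl x) = inl (z.right x) := by
  ext <;> simp [holomorphToMulAut, lift, MulAut.conj_apply]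

theorem holomorphToMulAut_inr (z : Holomorph N) (g : G) :
    holomorphToMulAut φ hφ z (inr g) = inl (z.left / φ g z.left) * inr g := by
  ext <;> simp [holomorphToMulAut, lift, MulAut.conj_apply, div_eq_mul_inv]

theorem holomorphToMulAut_injective {g₀ : G}
    (hfree : Function.Injective fun x => x / φ g₀ x) :
    Function.Injective (holomorphToMulAut φ hφ) := by
  rw [injective_iff_map_eq_one]
  intro z hz
  have hright : z.right = 1 := MulEquiv.ext fun x =>
    inl_injective (φ := φ) (by simpa [holomorphToMulAut_inl] using DFunLike.congr_fun hz (inl x))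
  have hleft : z.left = 1 := hfree <| by
    have h := DFunLike.congr_fun hz (inr g₀)
    rw [holomorphToMulAut_inr, MulAut.one_apply, mul_eq_right,
      map_eq_one_iff _ inl_injective] at h
    simpa using h
  exact SemidirectProduct.ext hleft hright

theorem holomorphToMulAut_surjective
    (hexp : (Monoid.exponent N).Coprime (Monoid.exponent G)) (hφinj : Function.Injective φ)
    {g₀ : G} (hg₀ : Subgroup.zpowers g₀ = ⊤)
    (hfree : Function.Surjective fun x => x / φ g₀ x) :
    Function.Surjective (holomorphToMulAut φ hφ) := by
  intro β
  set α := mulAutRestrictInl hexp β with hα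
  set y := β (inr g₀) with hy_def
  -- conjugating `inl x` by `β (inr g₀)` shows that `β (inr g₀)` acts on `N` as `g₀` does
  have hy : y.right = g₀ := hφinj <| MulEquiv.ext fun x => by
    have h := congrArg β (inl_aut g₀ (α.symm x))
    simp only [map_mul, map_inv, ← inl_mulAutRestrictInl hexp, ← hα, ← hy_def] at h
    rw [mul_inl_mul_inv, inl_inj, MulAut.apply_apply_of_mem_center (hφ g₀)] at h
    simpa using h.symm
  obtain ⟨w, hw : w / φ g₀ w = y.left⟩ := hfree y.left
  refine ⟨⟨w, α⟩, MulEquiv.toMonoidHom_injective (hom_ext ?_ ?_)⟩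
  · ext1 x
    exact (holomorphToMulAut_inl hφ _ x).trans (inl_mulAutRestrictInl hexp β x)
  · refine MonoidHom.eq_of_eqOn_dense (s := {g₀}) ?_ ?_
    · rw [← Subgroup.zpowers_eq_closure, hg₀]
    · rw [Set.eqOn_singleton]
      simp only [MonoidHom.comp_apply, MulEquiv.coe_toMonoidHom, holomorphToMulAut_inr]
      rw [hw, ← hy, inl_left_mul_inr_right, hy]

noncomputable def mulAutEquivHolomorph (hexp : (Monoid.exponent N).Coprime (Monoid.exponent G))
    (hφinj : Function.Injective φ) {g₀ : G} (hg₀ : Subgroup.zpowers g₀ = ⊤)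
    (hcentral : φ g₀ ∈ Subgroup.center (MulAut N))
    (hfree : Function.Bijective fun x => x / φ g₀ x) :
    MulAut (N ⋊[φ] G) ≃* Holomorph N :=
  have hφG := MonoidHom.map_mem_center_of_zpowers_eq_top hg₀ hcentral
  (MulEquiv.ofBijective (holomorphToMulAut φ hφG)
    ⟨holomorphToMulAut_injective hφG hfree.1,
      holomorphToMulAut_surjective hφG hexp hφinj hg₀ hfree.2⟩).symm

end CommGroup

end SemidirectProduct


theorem Subgroup.zpowers_ofAdd_one_zmod (n : ℕ) :
    Subgroup.zpowers (ofAdd (1 : ZMod n)) = ⊤ :=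
  eq_top_iff.mpr fun g _ => by
    obtain ⟨m, hm⟩ := ZMod.intCast_surjective (toAdd g)
    exact Subgroup.mem_zpowers_iff.mpr ⟨m, by rw [← ofAdd_zsmul, zsmul_one, hm, ofAdd_toAdd]⟩

theorem ZModModule.exponent_multiplicative_dvd (n : ℕ) (M : Type*) [AddCommGroup M]
    [Module (ZMod n) M] : Monoid.exponent (Multiplicative M) ∣ n := by
  rw [Monoid.exponent_multiplicative]
  exact AddMonoid.exponent_dvd_of_forall_nsmul_eq_zero (ZModModule.char_nsmul_eq_zero n)

theorem ZModModule.ofAdd_pow (n : ℕ) {M : Type*} [AddCommGroup M] [Module (ZMod n) M] (v : M)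
    (k : ℕ) :
    ofAdd v ^ k = ofAdd ((k : ZMod n) • v) := by
  rw [← ofAdd_nsmul, Nat.cast_smul_eq_nsmul]

theorem map_ofAdd_natCast_apply_eq_pow_pow {Q r : ℕ} {N : Type*} [Group N]
    {φ : Multiplicative (ZMod Q) →* MulAut N} (hφ : ∀ x, φ (ofAdd 1) x = x ^ r) (k : ℕ) (x : N) :
    φ (ofAdd (k : ZMod Q)) x = x ^ r ^ k := by
  induction k generalizing x with
  | zero => simp
  | succ k ih =>
    rw [Nat.cast_succ, ofAdd_add, map_mul, MulAut.mul_apply, hφ, ih, ← pow_mul, ← pow_succ']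

section PowerAction

variable {p : ℕ} [Fact p.Prime] {M : Type*} [AddCommGroup M] [Module (ZMod p) M]

theorem ZModModule.bijective_div_pow {r : ℕ} (hr : (r : ZMod p) ≠ 1) :
    Function.Bijective fun x : Multiplicative M => x / x ^ r := by
  have hu : 1 - (r : ZMod p) ≠ 0 := sub_ne_zero.mpr hr.symm
  have h : (fun x : Multiplicative M => x / x ^ r) = ofAdd ∘ (Units.mk0 _ hu • ·) ∘ toAdd := by
    funext x
    rw [← ofAdd_toAdd x, ZModModule.ofAdd_pow p]
    simp [Units.smul_mk0, sub_smul]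
  rw [h]
  exact ofAdd.bijective.comp ((MulAction.bijective _).comp toAdd.bijective)

theorem injective_of_map_ofAdd_one_eq_pow [Nontrivial M] {Q r : ℕ} [NeZero Q]
    (hr : orderOf (r : ZMod p) = Q) {φ : Multiplicative (ZMod Q) →* MulAut (Multiplicative M)}
    (hφ : ∀ x, φ (ofAdd 1) x = x ^ r) : Function.Injective φ := by
  rw [injective_iff_map_eq_one]
  intro g hg
  obtain ⟨v, hv⟩ := exists_ne (0 : M)
  set k := (toAdd g).val
  have hgk : g = ofAdd (k : ZMod Q) := by rw [ZMod.natCast_zmod_val, ofAdd_toAdd]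
  have hrk : (r : ZMod p) ^ k = 1 := by
    have h := DFunLike.congr_fun hg (ofAdd v)
    rw [hgk, map_ofAdd_natCast_apply_eq_pow_pow hφ, ZModModule.ofAdd_pow p, MulAut.one_apply] at h
    exact_mod_cast smul_left_injective (ZMod p) hv ((ofAdd.injective h).trans (one_smul _ v).symm)
  have hk : k = 0 := Nat.eq_zero_of_dvd_of_lt (hr ▸ orderOf_dvd_of_pow_eq_one hrk) (ZMod.val_lt _)
  rw [hgk, hk, Nat.cast_zero, ofAdd_zero]

theorem ZMod.coprime_orderOf {a : ZMod p} (ha : a ≠ 0) : p.Coprime (orderOf a) :=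
  ((Nat.coprime_self_sub_right (Fact.out : p.Prime).one_le).mpr (Nat.coprime_one_right p))
    |>.coprime_dvd_right (ZMod.orderOf_dvd_card_sub_one ha)

noncomputable def mulAutEquivHolomorphOfPow [Nontrivial M] {Q : ℕ} (hQ : 1 < Q) {r : ℕ}
    (hr : orderOf (r : ZMod p) = Q)
    (φ : Multiplicative (ZMod Q) →* MulAut (Multiplicative M))
    (hφ : ∀ x, φ (ofAdd 1) x = x ^ r) :
    MulAut (Multiplicative M ⋊[φ] Multiplicative (ZMod Q)) ≃* Holomorph (Multiplicative M) :=
  haveI : NeZero Q := ⟨by omega⟩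
  have hr0 : (r : ZMod p) ≠ 0 := fun h => by rw [h, orderOf_zero] at hr; omega
  have hr1 : (r : ZMod p) ≠ 1 := fun h => by rw [h, orderOf_one] at hr; omega
  have hpQ : p.Coprime Q := hr ▸ ZMod.coprime_orderOf hr0
  SemidirectProduct.mulAutEquivHolomorph
    ((hpQ.coprime_dvd_left (ZModModule.exponent_multiplicative_dvd p M)).coprime_dvd_right
      (ZModModule.exponent_multiplicative_dvd Q (ZMod Q)))
    (injective_of_map_ofAdd_one_eq_pow hr hφ) (Subgroup.zpowers_ofAdd_one_zmod Q)
    (Subgroup.mem_center_iff.mpr fun α => MulEquiv.ext fun x => by simp [hφ])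
    (by simpa only [hφ] using ZModModule.bijective_div_pow hr1)

end PowerAction

def ZModModule.linearEquivMulEquivMulAut (n : ℕ) (M : Type*) [AddCommGroup M]
    [Module (ZMod n) M] : (M ≃ₗ[ZMod n] M) ≃* MulAut (Multiplicative M) where
  toFun e := AddEquiv.toMultiplicative e.toAddEquiv
  invFun e := (AddEquiv.toMultiplicative.symm e).toLinearEquiv (ZMod.map_smul _)
  map_mul' _ _ := rfl

def Matrix.GeneralLinearGroup.mulEquivMulAut (ι : Type*) [Fintype ι] [DecidableEq ι] (n : ℕ) :
    GL ι (ZMod n) ≃* MulAut (Multiplicative (ι → ZMod n)) :=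
  Matrix.GeneralLinearGroup.toLin.trans <|
    (LinearMap.GeneralLinearGroup.generalLinearEquiv _ _).trans <|
      ZModModule.linearEquivMulEquivMulAut n _

theorem stmt_17_general (p q : ℕ) (hp : p.Prime) (hq : q.Prime)
    (r : ℕ) (hr : orderOf ((r : ZMod p)) = q ^ 2)
    (φ : Multiplicative (ZMod (q ^ 2)) →* MulAut (Multiplicative (Fin 2 → ZMod p)))
    (hφ : ∀ x : Multiplicative (Fin 2 → ZMod p),
      φ (Multiplicative.ofAdd 1) x = x ^ r) :
    ∃ ψ : GL (Fin 2) (ZMod p) →* MulAut (Multiplicative (Fin 2 → ZMod p)),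
      (∀ (g : GL (Fin 2) (ZMod p)) (v : Fin 2 → ZMod p),
        ψ g (Multiplicative.ofAdd v) =
          Multiplicative.ofAdd
            ((g : Matrix (Fin 2) (Fin 2) (ZMod p)).mulVec v)) ∧
      Nonempty
        (MulAut (Multiplicative (Fin 2 → ZMod p) ⋊[φ] Multiplicative (ZMod (q ^ 2))) ≃*
          Multiplicative (Fin 2 → ZMod p) ⋊[ψ] GL (Fin 2) (ZMod p)) := by
  have : Fact p.Prime := ⟨hp⟩
  let ρ := Matrix.GeneralLinearGroup.mulEquivMulAut (Fin 2) p
  refine ⟨ρ.toMonoidHom, fun g v => rfl, ⟨?_⟩⟩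
  exact (mulAutEquivHolomorphOfPow (Nat.one_lt_pow two_ne_zero hq.one_lt) hr φ hφ).trans
    (SemidirectProduct.congr (MulEquiv.refl _) ρ fun _ => rfl).symm

theorem stmt_17 (p q : ℕ) (hp : p.Prime) (hq : q.Prime) (hpq : p ≠ q)
    (hdvd : q ^ 2 ∣ p - 1) (r : ℕ) (hr : orderOf ((r : ZMod p)) = q ^ 2)
    (φ : Multiplicative (ZMod (q ^ 2)) →* MulAut (Multiplicative (Fin 2 → ZMod p)))
    (hφ : ∀ x : Multiplicative (Fin 2 → ZMod p),
      φ (Multiplicative.ofAdd 1) x = x ^ r) :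
    ∃ ψ : GL (Fin 2) (ZMod p) →* MulAut (Multiplicative (Fin 2 → ZMod p)),
      (∀ (g : GL (Fin 2) (ZMod p)) (v : Fin 2 → ZMod p),
        ψ g (Multiplicative.ofAdd v) =
          Multiplicative.ofAdd
            ((g : Matrix (Fin 2) (Fin 2) (ZMod p)).mulVec v)) ∧
      Nonempty
        (MulAut (Multiplicative (Fin 2 → ZMod p) ⋊[φ] Multiplicative (ZMod (q ^ 2))) ≃*
          Multiplicative (Fin 2 → ZMod p) ⋊[ψ] GL (Fin 2) (ZMod p)) :=
  stmt_17_general p q hp hq r hr φ hφ
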